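/- Let b1, ..., bk be the s-t bridges of G in their common order along s-t paths, and define R_i as the set of vertices reachable from s in G \ b_i. Then R_1 ⊆ R_2 ⊆ ... ⊆ R_k. -/

import Mathlib

/-!
For `i < j` the edge `bᵢ` precedes `bⱼ` on every `s`-`t` walk. Hence `s` cannot reach the
tail of `bⱼ` while avoiding both `bᵢ` and `bⱼ`: such a walk, followed by `bⱼ` and by the part of
an `s`-`t` walk after its last use of `bⱼ`, would be an `s`-`t` walk on which `bⱼ` occurs
exactly once and `bᵢ` does not occur before it. So a walk from `s` avoiding `bᵢ` can never
use `bⱼ`, which is `Rᵢ ⊆ Rⱼ`.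
-/

variable {V : Type*}

/-- Reachability via directed edges of relation `E`. -/
def reaches (E : V → V → Prop) : V → V → Prop := Relation.ReflTransGen E

/-- The graph with the single edge `e` deleted. -/
def eraseEdge (E : V → V → Prop) (e : V × V) : V → V → Prop :=
  fun a b => E a b ∧ (a, b) ≠ e

/-- `e` is an `s`-`t` bridge: it is an edge and its removal destroys all `s`-`t` paths. -/
def IsBridge (E : V → V → Prop) (s t : V) (e : V × V) : Prop :=
  E e.1 e.2 ∧ ¬ reaches (eraseEdge E e) s t

/-- A directed walk from `s` to `t` whose successive vertices after `s` are `p`. -/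
def IsWalk (E : V → V → Prop) (s t : V) (p : List V) : Prop :=
  List.Chain E s p ∧ (s :: p).getLast (List.cons_ne_nil s p) = t

/-- The list of edges of the walk `s :: p`. -/
def edgesOf (s : V) (p : List V) : List (V × V) := (s :: p).zip p

open List

section Reachability

variable {E : V → V → Prop} {s t v : V} {e : V × V}

theorem reaches_eraseEdge_of_reaches_snd (h : reaches E e.2 t) : reaches (eraseEdge E e) e.2 t := by
  induction h with
  | refl => exact .refl
  | @tail u w _ huw ih =>
    by_cases hue : (u, w) = e
    · rw [← hue]
      exact .refl
    · exact ih.tail ⟨huw, hue⟩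

theorem reaches_eraseEdge_of_not_reaches_fst (he : ¬ reaches (eraseEdge E e) s e.1)
    (h : reaches E s v) : reaches (eraseEdge E e) s v := by
  induction h with
  | refl => exact .refl
  | @tail u w _ huw ih =>
    refine ih.tail ⟨huw, fun hue => he ?_⟩
    subst hue
    exact ih

end Reachability

theorem List.not_pair_sublist_append_cons {α : Type*} {a b : α} {l₁ l₂ : List α} (hab : a ≠ b)
    (ha : a ∉ l₁) (hb : b ∉ l₂) : ¬ [a, b] <+ l₁ ++ b :: l₂ := by
  rw [sublist_append_iff]
  rintro ⟨_ | ⟨x, xs⟩, y, hxy, hx, hy⟩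
  · rw [nil_append] at hxy
    subst hxy
    exact hb ((hy.of_cons_of_ne hab).subset (by simp))
  · obtain ⟨rfl, -⟩ := cons_eq_cons.mp hxy
    exact ha (hx.subset mem_cons_self)

section Walks

variable {E F : V → V → Prop} {s t u : V} {p q : List V} {e : V × V}

theorem reaches_iff_exists_isWalk : reaches E s t ↔ ∃ p, IsWalk E s t p :=
  ⟨exists_isChain_cons_of_relationReflTransGen,
    fun ⟨p, hp⟩ => relationReflTransGen_of_exists_isChain_cons p hp.1 hp.2⟩

theorem isWalk_cons {a : V} : IsWalk E s t (a :: p) ↔ E s a ∧ IsWalk E a t p :=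
  ⟨fun ⟨h, hl⟩ => ⟨(isChain_cons_cons.mp h).1, (isChain_cons_cons.mp h).2, hl⟩,
    fun ⟨hsa, h, hl⟩ => ⟨isChain_cons_cons.mpr ⟨hsa, h⟩, hl⟩⟩

theorem IsWalk.mono (hEF : ∀ a b, E a b → F a b) (hp : IsWalk E s t p) : IsWalk F s t p :=
  ⟨IsChain.imp hEF hp.1, hp.2⟩

theorem IsWalk.append (hp : IsWalk E s u p) (hq : IsWalk E u t q) : IsWalk E s t (p ++ q) := by
  induction p generalizing s with
  | nil =>
    obtain rfl : s = u := hp.2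
    exact hq
  | cons a p ih =>
    obtain ⟨hsa, hp⟩ := isWalk_cons.mp hp
    exact isWalk_cons.mpr ⟨hsa, ih hp⟩

theorem edgesOf_cons (s a : V) (p : List V) : edgesOf s (a :: p) = (s, a) :: edgesOf a p := rfl

theorem IsWalk.edgesOf_append (hp : IsWalk E s u p) :
    edgesOf s (p ++ q) = edgesOf s p ++ edgesOf u q := by
  induction p generalizing s with
  | nil => exact hp.2 ▸ rfl
  | cons a p ih =>
    simp only [cons_append, edgesOf_cons, ih (isWalk_cons.mp hp).2]

theorem IsWalk.rel_and_reaches_of_mem_edgesOf (hp : IsWalk E s t p) (he : e ∈ edgesOf s p) :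
    E e.1 e.2 ∧ reaches E e.2 t := by
  induction p generalizing s with
  | nil => simp [edgesOf] at he
  | cons a p ih =>
    obtain ⟨hsa, hp⟩ := isWalk_cons.mp hp
    rcases mem_cons.mp (edgesOf_cons s a p ▸ he) with rfl | he
    · exact ⟨hsa, reaches_iff_exists_isWalk.mpr ⟨p, hp⟩⟩
    · exact ih hp he

end Walks

theorem not_reaches_fst_of_forall_pair_sublist {E : V → V → Prop} {s t : V} {b b' : V × V}
    (hst : reaches E s t) (hne : b ≠ b')
    (hord : ∀ p, IsWalk E s t p → [b, b'] <+ edgesOf s p) :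
    ¬ reaches (eraseEdge (eraseEdge E b) b') s b'.1 := by
  obtain ⟨P, hP⟩ := reaches_iff_exists_isWalk.mp hst
  obtain ⟨hb', hb't⟩ :=
    hP.rel_and_reaches_of_mem_edgesOf ((hord P hP).subset (by simp : b' ∈ [b, b']))
  obtain ⟨q, hq⟩ := reaches_iff_exists_isWalk.mp (reaches_eraseEdge_of_reaches_snd hb't)
  intro h
  obtain ⟨p, hp⟩ := reaches_iff_exists_isWalk.mp h
  have hwalk : IsWalk E s t (p ++ b'.2 :: q) :=
    (hp.mono fun _ _ h => h.1.1).append (isWalk_cons.mpr ⟨hb', hq.mono fun _ _ h => h.1⟩)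
  have hedges : edgesOf s (p ++ b'.2 :: q) = edgesOf s p ++ b' :: edgesOf b'.2 q := by
    rw [hp.edgesOf_append, edgesOf_cons]
  refine not_pair_sublist_append_cons hne (fun hb => ?_) (fun hb => ?_)
    (hedges ▸ hord _ hwalk)
  · exact (hp.rel_and_reaches_of_mem_edgesOf hb).1.1.2 rfl
  · exact (hq.rel_and_reaches_of_mem_edgesOf hb).1.2 rfl

theorem stmt14_general (E : V → V → Prop) (s t : V) (hst : reaches E s t)
    (B : List (V × V))
    (horder : ∀ p : List V, IsWalk E s t p → B.Sublist (edgesOf s p)) :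
    ∀ i j : ℕ, (hij : i ≤ j) → (hj : j < B.length) →
      ∀ v : V, reaches (eraseEdge E (B.get ⟨i, lt_of_le_of_lt hij hj⟩)) s v →
        reaches (eraseEdge E (B.get ⟨j, hj⟩)) s v := by
  intro i j hij hj v hv
  obtain rfl | hlt := hij.eq_or_lt
  · exact hv
  set bi := B.get ⟨i, lt_of_le_of_lt hij hj⟩
  set bj := B.get ⟨j, hj⟩
  by_cases hbij : bi = bj
  · rwa [← hbij]
  -- every list is pairwise related by `fun a b => [a, b] <+ B`
  have hpair : [bi, bj] <+ B :=
    pairwise_iff_getElem.mp (pairwise_iff_forall_sublist.mpr id) i j _ hj hlt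
  have hbj : ¬ reaches (eraseEdge (eraseEdge E bi) bj) s bj.1 :=
    not_reaches_fst_of_forall_pair_sublist hst hbij fun p hp => hpair.trans (horder p hp)
  exact Relation.ReflTransGen.mono (p := eraseEdge E bj) (fun _ _ h => ⟨h.1.1, h.2⟩) s v
    (reaches_eraseEdge_of_not_reaches_fst hbj hv)

/-- with the bridges b1,...,bk listed in their common order along
every s-t path, the reachable sets R_i = reach(s, G \ b_i) are nested increasingly. -/
theorem stmt14 (E : V → V → Prop) (s t : V) (hst : reaches E s t)
    (B : List (V × V)) (hnd : B.Nodup)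
    (hB : ∀ e : V × V, IsBridge E s t e ↔ e ∈ B)
    (horder : ∀ p : List V, IsWalk E s t p → B.Sublist (edgesOf s p)) :
    ∀ i j : ℕ, (hij : i ≤ j) → (hj : j < B.length) →
      ∀ v : V, reaches (eraseEdge E (B.get ⟨i, lt_of_le_of_lt hij hj⟩)) s v →
        reaches (eraseEdge E (B.get ⟨j, hj⟩)) s v :=
  stmt14_general E s t hst B horder
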